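/- arXiv:1501.01453 — 4 statements merged into one kernel-verified Lean document; each statement's English description precedes it below -/
import Mathlib

section
/- Let (Ω, 𝓕) be a measurable space and let c : 𝓕 → [0,1] be a monotone, normalized set function (c(∅) = 0, c(Ω) = 1, and A ⊆ B implies c(A) ≤ c(B)). Then c is submodular (i.e. c(A ∪ B) + c(A ∩ B) ≤ c(A) + c(B) for all A, B ∈ 𝓕) if and only if the Choquet integral with respect to c is convex on the space 𝓧 of bounded Borel-measurable real-valued functions on Ω: for all X, Y ∈ 𝓧 and all λ ∈ [0,1], ∫(λX + (1−λ)Y) dc ≤ λ ∫X dc + (1−λ) ∫Y dc. -/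
/-!
For `p ≤ X ≤ q` the function `x ↦ c {X > x}` is antitone, equals `1` below `p` and `0` from `q`
on, so `∫ X dc = ∫_p^q c {X > x} dx + p`. This gives monotonicity, translation equivariance and
positive homogeneity of the Choquet integral, so convexity amounts to subadditivity.

Indicators show that convexity forces submodularity: `∫ 1_A dc = c A` and
`∫ (1_A + 1_B) dc = c (A ∪ B) + c (A ∩ B)`.

For the converse, the superlevel sets of `X + t 1_A` (`t ≥ 0`) are `{X > x} ∪ (A ∩ {X > x - t})`,
whose intersection is `A ∩ {X > x}`; submodularity bounds `c` of them by a correction term that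
telescopes to `t c(A)` after integrating in `x`, so `∫ (X + t 1_A) dc ≤ ∫ X dc + t c(A)`.
Adding the layers `δ 1_{Y > δ(k+1)}` of a nonnegative `Y` one at a time and letting `δ → 0`
gives `∫ (X + Y) dc ≤ ∫ X dc + ∫ Y dc`.
-/

open MeasureTheory Set

/-- The Choquet integral of `X` with respect to the set function `c`:
`∫ X dc = ∫_{-∞}^0 (c(X > x) - 1) dx + ∫_0^∞ c(X > x) dx`. -/
noncomputable def choquet {Ω : Type*} [MeasurableSpace Ω] (c : Set Ω → ℝ) (X : Ω → ℝ) : ℝ :=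
  (∫ x in Set.Iio (0 : ℝ), (c {ω | x < X ω} - 1)) + ∫ x in Set.Ioi (0 : ℝ), c {ω | x < X ω}

theorem integral_Iio_sub_one_add_integral_Ioi_eq {G : ℝ → ℝ} (hG : Antitone G) {p q : ℝ}
    (h1 : ∀ x < p, G x = 1) (h0 : ∀ x, q ≤ x → G x = 0) :
    (∫ x in Iio 0, (G x - 1)) + ∫ x in Ioi 0, G x = (∫ x in p..q, G x) + p := by
  set a := min p 0 - 1
  set b := max q 0
  have ha : a < min p 0 := sub_one_lt _
  have hint : ∀ u v, IntervalIntegrable G volume u v := fun _ _ => hG.intervalIntegrable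
  have hneg : ∫ x in Iio 0, (G x - 1) = ∫ x in a..0, (G x - 1) := by
    rw [setIntegral_eq_of_subset_of_forall_sdiff_eq_zero measurableSet_Iio Ioo_subset_Iio_self,
      intervalIntegral.integral_of_le (by linarith [min_le_right p 0]),
      integral_Ioc_eq_integral_Ioo]
    rintro x ⟨hx0, hx⟩
    have hxa : x ≤ a := le_of_not_gt fun h => hx ⟨h, hx0⟩
    rw [h1 x (hxa.trans_lt (ha.trans_le (min_le_left p 0))), sub_self]
  have hpos : ∫ x in Ioi 0, G x = ∫ x in 0..b, G x := by
    rw [setIntegral_eq_of_subset_of_forall_sdiff_eq_zero measurableSet_Ioi Ioc_subset_Ioi_self,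
      intervalIntegral.integral_of_le (le_max_right q 0)]
    rintro x ⟨hx0, hx⟩
    exact h0 x ((le_max_left q 0).trans (le_of_not_ge fun h => hx ⟨hx0, h⟩))
  have hleft : ∫ x in a..p, G x = p - a := by
    rw [intervalIntegral.integral_congr_Ioo_of_le (g := fun _ => 1) (by linarith [min_le_left p 0])
      fun x hx => h1 x hx.2]
    simp
  have hright : ∫ x in q..b, G x = 0 := by
    rw [intervalIntegral.integral_congr (g := fun _ => 0) fun x hx => h0 x ?_]
    · simp
    · rw [uIcc_of_le (le_max_left q 0)] at hx; exact hx.1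
  rw [hneg, hpos, intervalIntegral.integral_sub (hint a 0) intervalIntegrable_const,
    intervalIntegral.integral_const, sub_add_eq_add_sub,
    intervalIntegral.integral_add_adjacent_intervals (hint a 0) (hint 0 b),
    ← intervalIntegral.integral_add_adjacent_intervals (hint a p) (hint p b),
    ← intervalIntegral.integral_add_adjacent_intervals (hint p q) (hint q b), hleft, hright]
  simp only [smul_eq_mul, mul_one]
  ring

theorem integral_comp_sub_right_sub_eq_mul {h : ℝ → ℝ} (hh : Antitone h) {p q t v : ℝ}
    (ht : 0 ≤ t) (hv : ∀ x < p, h x = v) (h0 : ∀ x, q ≤ x → h x = 0) :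
    ∫ x in p..q + t, (h (x - t) - h x) = t * v := by
  have hint : ∀ u w, IntervalIntegrable h volume u w := fun _ _ => hh.intervalIntegrable
  have hleft : ∫ x in p - t..p, h x = t * v := by
    rw [intervalIntegral.integral_congr_Ioo_of_le (g := fun _ => v) (by linarith)
      fun x hx => hv x hx.2]
    simp
  have hright : ∫ x in q..q + t, h x = 0 := by
    rw [intervalIntegral.integral_congr (g := fun _ => 0) fun x hx => h0 x ?_]
    · simp
    · rw [uIcc_of_le (by linarith)] at hx; exact hx.1
  have hshift : Antitone fun x => h (x - t) := hh.comp_monotone fun _ _ hab => by linarith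
  rw [intervalIntegral.integral_sub hshift.intervalIntegrable (hint _ _),
    intervalIntegral.integral_comp_sub_right, add_sub_cancel_right,
    intervalIntegral.integral_interval_sub_interval_comm (hint _ _) (hint _ _) (hint _ _),
    hleft, hright, sub_zero]

theorem Antitone.sum_mul_le_integral {G : ℝ → ℝ} (hG : Antitone G) {δ : ℝ} (hδ : 0 ≤ δ)
    (N : ℕ) : ∑ k ∈ Finset.range N, δ * G (δ * (k + 1)) ≤ ∫ x in 0..δ * N, G x := by
  have hGδ : Antitone fun u => G (δ * u) := hG.comp_monotone (monotone_mul_left_of_nonneg hδ)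
  have := (hGδ.antitoneOn (Icc 0 (0 + N))).sum_le_integral
  simp only [zero_add, Nat.cast_add, Nat.cast_one] at this
  rw [← Finset.mul_sum, ← mul_zero δ, ← intervalIntegral.smul_integral_comp_mul_left, smul_eq_mul]
  exact mul_le_mul_of_nonneg_left this hδ

theorem le_sum_ite_lt_add {δ y r : ℝ} (hδ : 0 < δ) (hyr : y ≤ r) :
    y ≤ ∑ k ∈ Finset.range ⌈r / δ⌉₊, (if δ * (k + 1) < y then δ else 0) + δ := by
  set j := ⌈y / δ⌉₊ - 1
  have hj : j ≤ ⌈r / δ⌉₊ := (Nat.sub_le _ _).trans (Nat.ceil_mono (by gcongr))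
  have hy : y ≤ δ * (j + 1) := by
    rw [← div_le_iff₀' hδ]
    exact (Nat.le_ceil _).trans (by exact_mod_cast (show ⌈y / δ⌉₊ ≤ j + 1 by omega))
  have hsum : δ * j ≤ ∑ k ∈ Finset.range ⌈r / δ⌉₊, (if δ * (k + 1) < y then δ else 0) :=
    calc δ * j = ∑ k ∈ Finset.range j, (if δ * (k + 1) < y then δ else 0) := by
          rw [Finset.sum_congr rfl fun k hk => if_pos ?_]
          · simp [mul_comm]
          · rw [← lt_div_iff₀' hδ]
            exact_mod_cast Nat.lt_ceil.mp (by simp at hk; omega)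
      _ ≤ _ := Finset.sum_le_sum_of_subset_of_nonneg (Finset.range_subset_range.mpr hj)
          fun k _ _ => by positivity
  linarith

theorem indicator_add_indicator_mem_Icc {α : Type*} (A B : Set α) (a : α) :
    A.indicator (1 : α → ℝ) a + B.indicator 1 a ∈ Icc 0 2 := by
  by_cases h : a ∈ A <;> by_cases h' : a ∈ B <;> norm_num [h, h']

structure IsCapacity {Ω : Type*} [MeasurableSpace Ω] (c : Set Ω → ℝ) : Prop where
  mono : ∀ ⦃A B : Set Ω⦄, MeasurableSet A → MeasurableSet B → A ⊆ B → c A ≤ c B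
  empty : c ∅ = 0
  univ : c univ = 1

def IsSubmodular {Ω : Type*} [MeasurableSpace Ω] (c : Set Ω → ℝ) : Prop :=
  ∀ A B : Set Ω, MeasurableSet A → MeasurableSet B → c (A ∪ B) + c (A ∩ B) ≤ c A + c B

section

variable {Ω : Type*} [MeasurableSpace Ω] {c : Set Ω → ℝ} {X Y : Ω → ℝ} {p q : ℝ}

namespace IsCapacity

theorem nonempty (hc : IsCapacity c) : Nonempty Ω := by
  by_contra h
  simpa [univ_eq_empty_iff.mpr (not_nonempty_iff.mp h), hc.empty] using hc.univ

theorem antitone_superlevel (hc : IsCapacity c) (hX : Measurable X) :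
    Antitone fun x => c {ω | x < X ω} := fun _ _ hxy =>
  hc.mono (hX measurableSet_Ioi) (hX measurableSet_Ioi) fun _ h => hxy.trans_lt h

theorem antitone_inter_superlevel (hc : IsCapacity c) (hX : Measurable X) {A : Set Ω}
    (hA : MeasurableSet A) : Antitone fun x => c (A ∩ {ω | x < X ω}) := fun _ _ hxy =>
  hc.mono (hA.inter (hX measurableSet_Ioi)) (hA.inter (hX measurableSet_Ioi))
    (inter_subset_inter_right A fun _ h => hxy.trans_lt h)

theorem choquet_eq_intervalIntegral_add (hc : IsCapacity c) (hX : Measurable X)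
    (hXpq : ∀ ω, X ω ∈ Icc p q) : choquet c X = (∫ x in p..q, c {ω | x < X ω}) + p := by
  unfold choquet
  refine integral_Iio_sub_one_add_integral_Ioi_eq (hc.antitone_superlevel hX) (fun x hx => ?_)
    fun x hx => ?_
  · rw [eq_univ_of_forall (s := {ω | x < X ω}) fun ω => hx.trans_le (hXpq ω).1, hc.univ]
  · rw [eq_empty_of_forall_notMem (s := {ω | x < X ω}) fun ω h => ((hXpq ω).2.trans hx).not_gt h,
      hc.empty]

theorem choquet_const (hc : IsCapacity c) (a : ℝ) : choquet c (fun _ => a) = a := by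
  rw [hc.choquet_eq_intervalIntegral_add measurable_const fun _ => ⟨le_rfl, le_rfl⟩,
    intervalIntegral.integral_same, zero_add]

theorem choquet_mono (hc : IsCapacity c) (hX : Measurable X) (hY : Measurable Y)
    (hpX : ∀ ω, p ≤ X ω) (hYq : ∀ ω, Y ω ≤ q) (hXY : ∀ ω, X ω ≤ Y ω) :
    choquet c X ≤ choquet c Y := by
  rw [hc.choquet_eq_intervalIntegral_add hX fun ω => ⟨hpX ω, (hXY ω).trans (hYq ω)⟩,
    hc.choquet_eq_intervalIntegral_add hY fun ω => ⟨(hpX ω).trans (hXY ω), hYq ω⟩]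
  obtain ⟨ω⟩ := hc.nonempty
  gcongr ?_ + _
  refine intervalIntegral.integral_mono_on ((hpX ω).trans ((hXY ω).trans (hYq ω)))
    (hc.antitone_superlevel hX).intervalIntegrable (hc.antitone_superlevel hY).intervalIntegrable
    fun x _ => hc.mono (hX measurableSet_Ioi) (hY measurableSet_Ioi) fun ω h => h.trans_le (hXY ω)

theorem choquet_add_const (hc : IsCapacity c) (hX : Measurable X) (hXpq : ∀ ω, X ω ∈ Icc p q)
    (a : ℝ) : choquet c (fun ω => X ω + a) = choquet c X + a := by
  rw [hc.choquet_eq_intervalIntegral_add (hX.add_const a) (p := p + a) (q := q + a)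
      fun ω => ⟨by linarith [(hXpq ω).1], by linarith [(hXpq ω).2]⟩,
    hc.choquet_eq_intervalIntegral_add hX hXpq, ← intervalIntegral.integral_comp_add_right]
  simp only [add_lt_add_iff_right]
  ring

theorem choquet_const_mul (hc : IsCapacity c) (hX : Measurable X) (hXpq : ∀ ω, X ω ∈ Icc p q)
    {a : ℝ} (ha : 0 ≤ a) : choquet c (fun ω => a * X ω) = a * choquet c X := by
  rcases ha.eq_or_lt with rfl | ha
  · simp only [zero_mul, hc.choquet_const]
  rw [hc.choquet_eq_intervalIntegral_add (hX.const_mul a) (p := a * p) (q := a * q)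
      fun ω => ⟨by gcongr; exact (hXpq ω).1, by gcongr; exact (hXpq ω).2⟩,
    hc.choquet_eq_intervalIntegral_add hX hXpq,
    ← intervalIntegral.smul_integral_comp_mul_left]
  simp only [mul_lt_mul_iff_right₀ ha, smul_eq_mul]
  ring

theorem choquet_indicator (hc : IsCapacity c) {A : Set Ω} (hA : MeasurableSet A) :
    choquet c (A.indicator 1) = c A := by
  have hbd : ∀ ω, A.indicator (1 : Ω → ℝ) ω ∈ Icc 0 1 := fun ω => by
    by_cases h : ω ∈ A <;> simp [h]
  have hlevel : EqOn (fun x : ℝ => c {ω | x < A.indicator 1 ω}) (fun _ => c A) (Ioo 0 1) :=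
    fun x hx => by
      simp only
      congr 1
      ext ω
      by_cases h : ω ∈ A <;> simp [h, hx.2, hx.1.le]
  rw [hc.choquet_eq_intervalIntegral_add (measurable_one.indicator hA) hbd,
    intervalIntegral.integral_congr_Ioo_of_le zero_le_one hlevel]
  simp

theorem choquet_indicator_add_indicator (hc : IsCapacity c) {A B : Set Ω}
    (hA : MeasurableSet A) (hB : MeasurableSet B) :
    choquet c (fun ω => A.indicator 1 ω + B.indicator 1 ω) = c (A ∪ B) + c (A ∩ B) := by
  set Z := fun ω => A.indicator (1 : Ω → ℝ) ω + B.indicator 1 ω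
  have hZ : Measurable Z := (measurable_one.indicator hA).add (measurable_one.indicator hB)
  have hlow : EqOn (fun x : ℝ => c {ω | x < Z ω}) (fun _ => c (A ∪ B)) (Ioo 0 1) :=
    fun x hx => by
      simp only
      congr 1
      ext ω
      by_cases h : ω ∈ A <;> by_cases h' : ω ∈ B <;> simp [Z, h, h'] <;> linarith [hx.1, hx.2]
  have hhigh : EqOn (fun x : ℝ => c {ω | x < Z ω}) (fun _ => c (A ∩ B)) (Ioo 1 2) :=
    fun x hx => by
      simp only
      congr 1
      ext ω
      by_cases h : ω ∈ A <;> by_cases h' : ω ∈ B <;> simp [Z, h, h'] <;> linarith [hx.1, hx.2]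
  have hint : ∀ a b, IntervalIntegrable (fun x => c {ω | x < Z ω}) volume a b :=
    fun _ _ => (hc.antitone_superlevel hZ).intervalIntegrable
  rw [hc.choquet_eq_intervalIntegral_add hZ (indicator_add_indicator_mem_Icc A B),
    ← intervalIntegral.integral_add_adjacent_intervals (hint 0 1) (hint 1 2),
    intervalIntegral.integral_congr_Ioo_of_le zero_le_one hlow,
    intervalIntegral.integral_congr_Ioo_of_le one_le_two hhigh]
  norm_num

theorem choquet_midpoint_indicator (hc : IsCapacity c) {A B : Set Ω}
    (hA : MeasurableSet A) (hB : MeasurableSet B) :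
    choquet c (fun ω => 2⁻¹ * A.indicator 1 ω + (1 - 2⁻¹) * B.indicator 1 ω) =
      2⁻¹ * (c (A ∪ B) + c (A ∩ B)) := by
  rw [← hc.choquet_indicator_add_indicator hA hB,
    ← hc.choquet_const_mul (X := fun ω => A.indicator 1 ω + B.indicator 1 ω)
      ((measurable_one.indicator hA).add (measurable_one.indicator hB))
      (indicator_add_indicator_mem_Icc A B) (by norm_num)]
  congr 1
  funext ω
  ring

end IsCapacity

namespace IsSubmodular

theorem superlevel_add_indicator_le (hsub : IsSubmodular c) (hX : Measurable X) {A : Set Ω}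
    (hA : MeasurableSet A) {t : ℝ} (ht : 0 ≤ t) (x : ℝ) :
    c {ω | x < X ω + A.indicator (fun _ => t) ω} ≤
      c {ω | x < X ω} + (c (A ∩ {ω | x - t < X ω}) - c (A ∩ {ω | x < X ω})) := by
  have hunion : {ω | x < X ω + A.indicator (fun _ => t) ω} =
      {ω | x < X ω} ∪ (A ∩ {ω | x - t < X ω}) := by
    ext ω
    by_cases h : ω ∈ A
    · simpa [h, sub_lt_iff_lt_add] using fun hx : x < X ω => hx.trans_le (le_add_of_nonneg_right ht)
    · simp [h]
  have hinter : {ω | x < X ω} ∩ (A ∩ {ω | x - t < X ω}) = A ∩ {ω | x < X ω} := by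
    ext ω
    simp only [mem_inter_iff, mem_ofPred_eq]
    exact ⟨fun h => ⟨h.2.1, h.1⟩, fun h => ⟨h.2, h.1, by linarith [h.2]⟩⟩
  have hsub' := hsub {ω | x < X ω} (A ∩ {ω | x - t < X ω}) (hX measurableSet_Ioi)
    (hA.inter (hX measurableSet_Ioi))
  rw [hinter] at hsub'
  rw [hunion]
  linarith

theorem choquet_add_indicator_le (hsub : IsSubmodular c) (hc : IsCapacity c)
    (hX : Measurable X) (hXpq : ∀ ω, X ω ∈ Icc p q) {A : Set Ω} (hA : MeasurableSet A)
    {t : ℝ} (ht : 0 ≤ t) :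
    choquet c (fun ω => X ω + A.indicator (fun _ => t) ω) ≤ choquet c X + t * c A := by
  set h := fun x => c (A ∩ {ω | x < X ω})
  have hh : Antitone h := hc.antitone_inter_superlevel hX hA
  have hshift : ∫ x in p..q + t, (h (x - t) - h x) = t * c A := by
    refine integral_comp_sub_right_sub_eq_mul hh ht (fun x hx => ?_) fun x hx => ?_
    · show c (A ∩ {ω | x < X ω}) = c A
      rw [(inter_eq_left (t := {ω | x < X ω})).mpr fun ω _ => hx.trans_le (hXpq ω).1]
    · show c (A ∩ {ω | x < X ω}) = 0
      rw [eq_empty_of_forall_notMem (s := {ω | x < X ω})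
        fun ω h' => ((hXpq ω).2.trans hx).not_gt h', inter_empty, hc.empty]
  have hint : IntervalIntegrable (fun x => h (x - t) - h x) volume p (q + t) :=
    (hh.comp_monotone fun _ _ hxy => sub_le_sub_right hxy t).intervalIntegrable.sub
      hh.intervalIntegrable
  have hXt : ∀ ω, X ω + A.indicator (fun _ => t) ω ∈ Icc p (q + t) := fun ω =>
    ⟨le_add_of_le_of_nonneg (hXpq ω).1 (indicator_nonneg (fun _ _ => ht) ω),
      add_le_add (hXpq ω).2 (indicator_le_self' (fun _ _ => ht) ω)⟩
  have hpq : p ≤ q + t := by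
    obtain ⟨ω⟩ := hc.nonempty
    linarith [(hXpq ω).1, (hXpq ω).2]
  calc choquet c (fun ω => X ω + A.indicator (fun _ => t) ω)
      = (∫ x in p..q + t, c {ω | x < X ω + A.indicator (fun _ => t) ω}) + p :=
        hc.choquet_eq_intervalIntegral_add (hX.add (measurable_const.indicator hA)) hXt
    _ ≤ (∫ x in p..q + t, (c {ω | x < X ω} + (h (x - t) - h x))) + p := by
        gcongr ?_ + _
        exact intervalIntegral.integral_mono_on hpq
          (hc.antitone_superlevel (hX.add (measurable_const.indicator hA))).intervalIntegrable
          ((hc.antitone_superlevel hX).intervalIntegrable.add hint)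
          fun x _ => hsub.superlevel_add_indicator_le hX hA ht x
    _ = choquet c X + t * c A := by
        rw [intervalIntegral.integral_add (hc.antitone_superlevel hX).intervalIntegrable hint,
          hshift, hc.choquet_eq_intervalIntegral_add hX (q := q + t)
            fun ω => ⟨(hXpq ω).1, le_add_of_le_of_nonneg (hXpq ω).2 ht⟩]
        ring

theorem choquet_add_sum_indicator_le (hsub : IsSubmodular c) (hc : IsCapacity c)
    (hX : Measurable X) (hXpq : ∀ ω, X ω ∈ Icc p q) {ι : Type*} (s : Finset ι)
    {A : ι → Set Ω} {t : ι → ℝ} (hA : ∀ i ∈ s, MeasurableSet (A i)) (ht : ∀ i ∈ s, 0 ≤ t i) :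
    choquet c (fun ω => X ω + ∑ i ∈ s, (A i).indicator (fun _ => t i) ω) ≤
      choquet c X + ∑ i ∈ s, t i * c (A i) := by
  classical
  induction s using Finset.induction_on with
  | empty => simp
  | insert j s hj ih =>
    rw [Finset.forall_mem_insert] at hA ht
    set S := fun ω => ∑ i ∈ s, (A i).indicator (fun _ => t i) ω
    have hS : Measurable S :=
      Finset.measurable_sum s fun i hi => measurable_const.indicator (hA.2 i hi)
    have hXS : ∀ ω, X ω + S ω ∈ Icc p (q + ∑ i ∈ s, t i) := fun ω =>
      ⟨le_add_of_le_of_nonneg (hXpq ω).1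
          (Finset.sum_nonneg fun i hi => indicator_nonneg (fun _ _ => ht.2 i hi) ω),
        add_le_add (hXpq ω).2 (Finset.sum_le_sum fun i hi =>
          indicator_le_self' (fun _ _ => ht.2 i hi) ω)⟩
    calc choquet c (fun ω => X ω + ∑ i ∈ insert j s, (A i).indicator (fun _ => t i) ω)
        = choquet c (fun ω => X ω + S ω + (A j).indicator (fun _ => t j) ω) := by
          congr 1
          funext ω
          simp only [S, Finset.sum_insert hj]
          ring
      _ ≤ choquet c (fun ω => X ω + S ω) + t j * c (A j) :=
          hsub.choquet_add_indicator_le hc (hX.add hS) hXS hA.1 ht.1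
      _ ≤ choquet c X + ∑ i ∈ insert j s, t i * c (A i) := by
          rw [Finset.sum_insert hj]
          linarith [ih hA.2 ht.2]

theorem choquet_add_le_of_nonneg (hsub : IsSubmodular c) (hc : IsCapacity c)
    (hX : Measurable X) (hY : Measurable Y) (hXpq : ∀ ω, X ω ∈ Icc p q) {r : ℝ}
    (hYr : ∀ ω, Y ω ∈ Icc 0 r) :
    choquet c (fun ω => X ω + Y ω) ≤ choquet c X + choquet c Y := by
  refine le_of_forall_pos_le_add fun δ hδ => ?_
  set N := ⌈r / δ⌉₊
  set B : ℕ → Set Ω := fun k => {ω | δ * (k + 1) < Y ω}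
  have hB : ∀ k, MeasurableSet (B k) := fun k => hY measurableSet_Ioi
  set S := fun ω => ∑ k ∈ Finset.range N, (B k).indicator (fun _ => δ) ω
  have hS : Measurable S := Finset.measurable_sum _ fun k _ => measurable_const.indicator (hB k)
  have hXS : ∀ ω, X ω + S ω ∈ Icc p (q + N * δ) := fun ω =>
    ⟨le_add_of_le_of_nonneg (hXpq ω).1
        (Finset.sum_nonneg fun _ _ => indicator_nonneg (fun _ _ => hδ.le) ω),
      add_le_add (hXpq ω).2 <| (Finset.sum_le_sum fun _ _ =>
        indicator_le_self' (fun _ _ => hδ.le) ω).trans_eq (by simp)⟩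
  have hYS : ∀ ω, Y ω ≤ S ω + δ := fun ω => by
    simpa [S, B, indicator_apply] using le_sum_ite_lt_add hδ (hYr ω).2
  have hrN : r ≤ δ * N := by
    rw [← div_le_iff₀' hδ]
    exact Nat.le_ceil _
  have hsum : ∑ k ∈ Finset.range N, δ * c (B k) ≤ choquet c Y := by
    rw [hc.choquet_eq_intervalIntegral_add hY fun ω => ⟨(hYr ω).1, (hYr ω).2.trans hrN⟩,
      add_zero]
    exact (hc.antitone_superlevel hY).sum_mul_le_integral hδ.le N
  calc choquet c (fun ω => X ω + Y ω)
      ≤ choquet c (fun ω => X ω + S ω + δ) :=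
        hc.choquet_mono (hX.add hY) ((hX.add hS).add_const δ) (q := q + N * δ + δ)
          (fun ω => le_add_of_le_of_nonneg (hXpq ω).1 (hYr ω).1)
          (fun ω => add_le_add_left (hXS ω).2 δ) fun ω => by linarith [hYS ω]
    _ = choquet c (fun ω => X ω + S ω) + δ := hc.choquet_add_const (hX.add hS) hXS δ
    _ ≤ choquet c X + choquet c Y + δ := by
        gcongr
        exact (hsub.choquet_add_sum_indicator_le hc hX hXpq _ (fun k _ => hB k)
          fun _ _ => hδ.le).trans (by gcongr)

theorem choquet_add_le (hsub : IsSubmodular c) (hc : IsCapacity c) (hX : Measurable X)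
    (hY : Measurable Y) (hXpq : ∀ ω, X ω ∈ Icc p q) {p' q' : ℝ} (hYpq : ∀ ω, Y ω ∈ Icc p' q') :
    choquet c (fun ω => X ω + Y ω) ≤ choquet c X + choquet c Y := by
  have hY' : ∀ ω, Y ω - p' ∈ Icc 0 (q' - p') := fun ω =>
    ⟨sub_nonneg.mpr (hYpq ω).1, sub_le_sub_right (hYpq ω).2 p'⟩
  have hXY' : ∀ ω, X ω + (Y ω - p') ∈ Icc p (q + (q' - p')) := fun ω =>
    ⟨le_add_of_le_of_nonneg (hXpq ω).1 (hY' ω).1, add_le_add (hXpq ω).2 (hY' ω).2⟩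
  calc choquet c (fun ω => X ω + Y ω)
      = choquet c (fun ω => X ω + (Y ω - p')) + p' := by
        rw [← hc.choquet_add_const (X := fun ω => X ω + (Y ω - p')) (hX.add (hY.sub_const p'))
          hXY']
        congr 1
        funext ω
        ring
    _ ≤ choquet c X + choquet c (fun ω => Y ω - p') + p' := by
        gcongr
        exact hsub.choquet_add_le_of_nonneg hc hX (hY.sub_const p') hXpq hY'
    _ = choquet c X + choquet c Y := by
        rw [add_assoc, ← hc.choquet_add_const (hY.sub_const p') hY']
        simp only [sub_add_cancel]

theorem choquet_convex (hsub : IsSubmodular c) (hc : IsCapacity c) (hX : Measurable X)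
    (hY : Measurable Y) (hXpq : ∀ ω, X ω ∈ Icc p q) {p' q' : ℝ} (hYpq : ∀ ω, Y ω ∈ Icc p' q')
    {l : ℝ} (hl : l ∈ Icc 0 1) :
    choquet c (fun ω => l * X ω + (1 - l) * Y ω) ≤ l * choquet c X + (1 - l) * choquet c Y := by
  have hl' : 0 ≤ 1 - l := sub_nonneg.mpr hl.2
  rw [← hc.choquet_const_mul hX hXpq hl.1, ← hc.choquet_const_mul hY hYpq hl']
  exact hsub.choquet_add_le hc (hX.const_mul l) (hY.const_mul (1 - l))
    (p := l * p) (q := l * q) (p' := (1 - l) * p') (q' := (1 - l) * q')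
    (fun ω => ⟨mul_le_mul_of_nonneg_left (hXpq ω).1 hl.1,
      mul_le_mul_of_nonneg_left (hXpq ω).2 hl.1⟩)
    (fun ω => ⟨mul_le_mul_of_nonneg_left (hYpq ω).1 hl', mul_le_mul_of_nonneg_left (hYpq ω).2 hl'⟩)

end IsSubmodular

end

theorem choquet_convex_iff_submodular_general {Ω : Type*} [MeasurableSpace Ω] (c : Set Ω → ℝ)
    (hc_mono : ∀ ⦃A B : Set Ω⦄, MeasurableSet A → MeasurableSet B → A ⊆ B → c A ≤ c B)
    (hc_empty : c ∅ = 0) (hc_univ : c Set.univ = 1) :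
    (∀ A B : Set Ω, MeasurableSet A → MeasurableSet B →
        c (A ∪ B) + c (A ∩ B) ≤ c A + c B) ↔
    (∀ X Y : Ω → ℝ, Measurable X → Measurable Y →
        (∃ M, ∀ ω, |X ω| ≤ M) → (∃ M, ∀ ω, |Y ω| ≤ M) →
        ∀ l : ℝ, l ∈ Set.Icc (0 : ℝ) 1 →
          choquet c (fun ω => l * X ω + (1 - l) * Y ω) ≤
            l * choquet c X + (1 - l) * choquet c Y) := by
  have hc : IsCapacity c := ⟨hc_mono, hc_empty, hc_univ⟩
  refine ⟨fun hsub X Y hX hY ⟨M, hXM⟩ ⟨M', hYM⟩ l hl => ?_, fun hconv A B hA hB => ?_⟩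
  · exact IsSubmodular.choquet_convex hsub hc hX hY (fun ω => abs_le.mp (hXM ω))
      (fun ω => abs_le.mp (hYM ω)) hl
  · have hbd : ∀ S : Set Ω, ∃ M, ∀ ω, |S.indicator (1 : Ω → ℝ) ω| ≤ M := fun S =>
      ⟨1, fun ω => by by_cases h : ω ∈ S <;> simp [h]⟩
    have hmid := hconv _ _ (measurable_one.indicator hA) (measurable_one.indicator hB)
      (hbd A) (hbd B) 2⁻¹ (by norm_num)
    rw [hc.choquet_midpoint_indicator hA hB, hc.choquet_indicator hA,
      hc.choquet_indicator hB] at hmid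
    linarith

/-- A monotone normalized set function `c` is submodular iff its Choquet integral is
convex on the space of bounded Borel-measurable functions. -/
theorem choquet_convex_iff_submodular {Ω : Type*} [MeasurableSpace Ω] (c : Set Ω → ℝ)
    (hc_mono : ∀ ⦃A B : Set Ω⦄, MeasurableSet A → MeasurableSet B → A ⊆ B → c A ≤ c B)
    (hc_range : ∀ A : Set Ω, MeasurableSet A → c A ∈ Set.Icc (0 : ℝ) 1)
    (hc_empty : c ∅ = 0) (hc_univ : c Set.univ = 1) :
    (∀ A B : Set Ω, MeasurableSet A → MeasurableSet B →
        c (A ∪ B) + c (A ∩ B) ≤ c A + c B) ↔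
    (∀ X Y : Ω → ℝ, Measurable X → Measurable Y →
        (∃ M, ∀ ω, |X ω| ≤ M) → (∃ M, ∀ ω, |Y ω| ≤ M) →
        ∀ l : ℝ, l ∈ Set.Icc (0 : ℝ) 1 →
          choquet c (fun ω => l * X ω + (1 - l) * Y ω) ≤
            l * choquet c X + (1 - l) * choquet c Y) :=
  choquet_convex_iff_submodular_general c hc_mono hc_empty hc_univ
end

section
/- Let (Ω, 𝓕) be a measurable space and let c : 𝓕 → [0,1] be a monotone, normalized set function. For every bounded measurable X : Ω → ℝ taking values in ℕ, one has ∫⌊X/2⌋ dc + ∫⌊(X+1)/2⌋ dc = ∫X dc, where the floor functions are applied pointwise. -/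
open MeasureTheory Set

/-!
For an `ℕ`-valued `X ≤ N`, the level function `x ↦ c(X > x)` is constant, equal to `c(X > n)`,
on each `[n, n + 1)` and vanishes beyond `N`, so `∫ X dc = ∑ₙ c(X > n)`. Since
`⌊X/2⌋ > n ↔ X > 2n + 1` and `⌊(X+1)/2⌋ > n ↔ X > 2n`, the two halves collect the odd and the
even terms of this series.
-/

lemma natFloor_eq_sum_indicator_Ico (g : ℕ → ℝ) {N : ℕ} (hg : ∀ n, N ≤ n → g n = 0) {x : ℝ}
    (hx : 0 ≤ x) :
    g ⌊x⌋₊ = ∑ n ∈ Finset.range N, (Ico (n : ℝ) (n + 1)).indicator (fun _ ↦ g n) x := by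
  simp_rw [indicator_apply, mem_Ico, ← Nat.floor_eq_iff hx, Finset.sum_ite_eq]
  split_ifs with h
  · rfl
  · exact hg _ (by simpa using h)

lemma setIntegral_Ioi_comp_natFloor (g : ℕ → ℝ) {N : ℕ} (hg : ∀ n, N ≤ n → g n = 0) :
    ∫ x in Ioi (0 : ℝ), g ⌊x⌋₊ = ∑ n ∈ Finset.range N, g n := by
  rw [← integral_Ici_eq_integral_Ioi,
    setIntegral_congr_fun measurableSet_Ici fun x hx ↦ natFloor_eq_sum_indicator_Ico g hg hx,
    integral_finsetSum _ fun n _ ↦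
      ((integrableOn_const (C := g n) measure_Ico_lt_top.ne).integrable_indicator
        measurableSet_Ico).integrableOn]
  refine Finset.sum_congr rfl fun n _ ↦ ?_
  rw [setIntegral_indicator measurableSet_Ico,
    inter_eq_right.mpr (Ico_subset_Ici_self.trans (Ici_subset_Ici.mpr n.cast_nonneg))]
  simp

lemma cast_floor_natCast_div_two (k : ℕ) : (⌊(k : ℝ) / 2⌋ : ℝ) = (k / 2 : ℕ) := by
  rw [← Int.natCast_floor_eq_floor (by positivity), Int.cast_natCast, Nat.floor_div_ofNat,
    Nat.floor_natCast]

section Choquet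

variable {Ω : Type*} [MeasurableSpace Ω] {c : Set Ω → ℝ}

lemma choquet_of_nonneg (hc_univ : c univ = 1) {Y : Ω → ℝ} (hY : ∀ ω, 0 ≤ Y ω) :
    choquet c Y = ∫ x in Ioi (0 : ℝ), c {ω | x < Y ω} := by
  have hneg : ∀ x ∈ Iio (0 : ℝ), c {ω | x < Y ω} - 1 = 0 := fun x hx ↦ by
    have : {ω | x < Y ω} = univ := eq_univ_of_forall fun ω ↦ (mem_Iio.mp hx).trans_le (hY ω)
    rw [this, hc_univ, sub_self]
  rw [choquet, setIntegral_congr_fun measurableSet_Iio hneg, integral_zero, zero_add]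

lemma hasSum_choquet_natCast (hc_empty : c ∅ = 0) (hc_univ : c univ = 1) {f : Ω → ℕ} {N : ℕ}
    (hf : ∀ ω, f ω ≤ N) :
    HasSum (fun n : ℕ ↦ c {ω | n < f ω}) (choquet c fun ω ↦ (f ω : ℝ)) := by
  have hvanish : ∀ n, N ≤ n → c {ω | n < f ω} = 0 := fun n hn ↦ by
    have : {ω | n < f ω} = ∅ :=
      eq_empty_of_forall_notMem fun ω hω ↦ (hf ω).not_gt (hn.trans_lt hω)
    rw [this, hc_empty]
  have hlevel : ∀ x ∈ Ioi (0 : ℝ), c {ω | x < f ω} = c {ω | ⌊x⌋₊ < f ω} := fun x hx ↦ by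
    simp_rw [Nat.floor_lt (le_of_lt (mem_Ioi.mp hx))]
  rw [choquet_of_nonneg hc_univ fun ω ↦ (f ω).cast_nonneg,
    setIntegral_congr_fun measurableSet_Ioi hlevel, setIntegral_Ioi_comp_natFloor _ hvanish]
  exact hasSum_sum_of_ne_finset_zero fun n hn ↦ hvanish n (by simpa using hn)

end Choquet

theorem choquet_floor_halves_add_general {Ω : Type*} [MeasurableSpace Ω] (c : Set Ω → ℝ)
    (hc_empty : c ∅ = 0) (hc_univ : c Set.univ = 1)
    (X : Ω → ℝ) (hXb : ∃ M, ∀ ω, |X ω| ≤ M)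
    (hXnat : ∀ ω, ∃ n : ℕ, X ω = n) :
    choquet c (fun ω => (⌊X ω / 2⌋ : ℝ)) + choquet c (fun ω => (⌊(X ω + 1) / 2⌋ : ℝ)) =
      choquet c X := by
  choose f hf using hXnat
  obtain rfl : X = fun ω ↦ (f ω : ℝ) := funext hf
  obtain ⟨M, hM⟩ := hXb
  have hbound : ∀ ω, f ω ≤ ⌈M⌉₊ := fun ω ↦
    Nat.cast_le.mp ((le_abs_self _).trans ((hM ω).trans (Nat.le_ceil M)))
  have hodd : HasSum (fun n ↦ c {ω | 2 * n + 1 < f ω})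
      (choquet c fun ω ↦ (⌊(f ω : ℝ) / 2⌋ : ℝ)) := by
    simp_rw [cast_floor_natCast_div_two]
    convert hasSum_choquet_natCast hc_empty hc_univ (f := fun ω ↦ f ω / 2)
      (fun ω ↦ (Nat.div_le_self _ _).trans (hbound ω)) using 4
    ext ω; omega
  have heven : HasSum (fun n ↦ c {ω | 2 * n < f ω})
      (choquet c fun ω ↦ (⌊((f ω : ℝ) + 1) / 2⌋ : ℝ)) := by
    simp_rw [← Nat.cast_add_one, cast_floor_natCast_div_two]
    convert hasSum_choquet_natCast hc_empty hc_univ (f := fun ω ↦ (f ω + 1) / 2) (N := ⌈M⌉₊)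
      (fun ω ↦ by have := hbound ω; omega) using 4
    ext ω; omega
  rw [add_comm]
  exact (heven.even_add_odd hodd).unique (hasSum_choquet_natCast hc_empty hc_univ hbound)

/-- For a bounded measurable `X` with values in `ℕ`,
`∫⌊X/2⌋ dc + ∫⌊(X+1)/2⌋ dc = ∫X dc`. -/
theorem choquet_floor_halves_add {Ω : Type*} [MeasurableSpace Ω] (c : Set Ω → ℝ)
    (hc_mono : ∀ ⦃A B : Set Ω⦄, MeasurableSet A → MeasurableSet B → A ⊆ B → c A ≤ c B)
    (hc_range : ∀ A : Set Ω, MeasurableSet A → c A ∈ Set.Icc (0 : ℝ) 1)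
    (hc_empty : c ∅ = 0) (hc_univ : c Set.univ = 1)
    (X : Ω → ℝ) (hX : Measurable X) (hXb : ∃ M, ∀ ω, |X ω| ≤ M)
    (hXnat : ∀ ω, ∃ n : ℕ, X ω = n) :
    choquet c (fun ω => (⌊X ω / 2⌋ : ℝ)) + choquet c (fun ω => (⌊(X ω + 1) / 2⌋ : ℝ)) =
      choquet c X :=
  choquet_floor_halves_add_general c hc_empty hc_univ X hXb hXnat
end

section
/- For k ∈ ℕ, define the subsets of ℕ²: Ã_k = ⋃_{i=0}^{k+1} {(x,y) ∈ ℕ² : x ≥ 2i and y ≥ 2(k−i)+1} and B̃_k = ⋃_{i=−1}^{k} {(x,y) ∈ ℕ² : x ≥ 2i+1 and y ≥ 2(k−i)}. Then Ã_k ∪ B̃_k = {(x,y) ∈ ℕ² : x + y ≥ 2k+1} and Ã_k ∩ B̃_k = {(x,y) ∈ ℕ² : x + y ≥ 2k+2}. -/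
/-- The combinatorial lemma on `ℕ²`: with
`Ã_k = ⋃_{i=0}^{k+1} {(x,y) : x ≥ 2i, y ≥ 2(k-i)+1}` and
`B̃_k = ⋃_{i=-1}^{k} {(x,y) : x ≥ 2i+1, y ≥ 2(k-i)}`, one has
`Ã_k ∪ B̃_k = {x+y ≥ 2k+1}` and `Ã_k ∩ B̃_k = {x+y ≥ 2k+2}`. -/
theorem union_inter_tilde_sets (k : ℕ) :
    (⋃ i ∈ Finset.Icc (0 : ℤ) ((k : ℤ) + 1),
        {p : ℕ × ℕ | 2 * i ≤ (p.1 : ℤ) ∧ 2 * ((k : ℤ) - i) + 1 ≤ (p.2 : ℤ)}) ∪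
      (⋃ i ∈ Finset.Icc (-1 : ℤ) (k : ℤ),
        {p : ℕ × ℕ | 2 * i + 1 ≤ (p.1 : ℤ) ∧ 2 * ((k : ℤ) - i) ≤ (p.2 : ℤ)}) =
      {p : ℕ × ℕ | 2 * k + 1 ≤ p.1 + p.2} ∧
    (⋃ i ∈ Finset.Icc (0 : ℤ) ((k : ℤ) + 1),
        {p : ℕ × ℕ | 2 * i ≤ (p.1 : ℤ) ∧ 2 * ((k : ℤ) - i) + 1 ≤ (p.2 : ℤ)}) ∩
      (⋃ i ∈ Finset.Icc (-1 : ℤ) (k : ℤ),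
        {p : ℕ × ℕ | 2 * i + 1 ≤ (p.1 : ℤ) ∧ 2 * ((k : ℤ) - i) ≤ (p.2 : ℤ)}) =
      {p : ℕ × ℕ | 2 * k + 2 ≤ p.1 + p.2} := by
  constructor
  · ext ⟨x, y⟩
    simp only [Set.mem_union, Set.mem_iUnion, Finset.mem_Icc, Set.mem_setOf_eq, exists_prop]
    constructor
    · rintro (⟨i, ⟨hi0, hi1⟩, hx, hy⟩ | ⟨i, ⟨hi0, hi1⟩, hx, hy⟩) <;> omega
    · intro h
      rcases Nat.even_or_odd x with ⟨m, hm⟩ | ⟨m, hm⟩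
      · exact Or.inl ⟨min (m : ℤ) (k + 1), by omega, by omega, by omega⟩
      · exact Or.inr ⟨min (m : ℤ) k, by omega, by omega, by omega⟩
  · ext ⟨x, y⟩
    simp only [Set.mem_inter_iff, Set.mem_iUnion, Finset.mem_Icc, Set.mem_setOf_eq, exists_prop]
    constructor
    · rintro ⟨⟨i, ⟨hi0, hi1⟩, hx, hy⟩, ⟨j, ⟨hj0, hj1⟩, hx', hy'⟩⟩
      omega
    · intro h
      constructor
      · rcases Nat.even_or_odd x with ⟨m, hm⟩ | ⟨m, hm⟩
        · exact ⟨min (m : ℤ) (k + 1), by omega, by omega, by omega⟩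
        · exact ⟨min (m : ℤ) (k + 1), by omega, by omega, by omega⟩
      · rcases Nat.even_or_odd x with ⟨m, hm⟩ | ⟨m, hm⟩
        · exact ⟨min ((m : ℤ) - 1) k, by omega, by omega, by omega⟩
        · exact ⟨min (m : ℤ) k, by omega, by omega, by omega⟩
end

section
/- Let (Ω, 𝓕) be a measurable space and let c : 𝓕 → [0,1] be a monotone, normalized set function. For every bounded measurable X : Ω → ℝ taking values in ℕ and every k ∈ ℕ, {ω : X(ω) + Y(ω) ≥ 2k+1} = A_k ∪ B_k and {ω : X(ω) + Y(ω) ≥ 2k+2} = A_k ∩ B_k, where Y : Ω → ℝ is bounded measurable taking values in ℕ, A_k = ⋃_{i=0}^{k+1} {ω : X(ω) ≥ 2i and Y(ω) ≥ 2(k−i)+1}, and B_k = ⋃_{i=−1}^{k} {ω : X(ω) ≥ 2i+1 and Y(ω) ≥ 2(k−i)}. -/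
open MeasureTheory Set

lemma key1 (m n k : ℕ) (h : 2*(k:ℤ)+1 ≤ m+n) :
    (∃ i:ℤ, (0 ≤ i ∧ i ≤ k+1) ∧ 2*i ≤ m ∧ 2*((k:ℤ)-i)+1 ≤ n) ∨
    (∃ i:ℤ, (-1 ≤ i ∧ i ≤ k) ∧ 2*i+1 ≤ m ∧ 2*((k:ℤ)-i) ≤ n) := by
  by_cases he : (m:ℤ) % 2 = 0
  · by_cases hb : (m:ℤ) ≥ 2*(k+1)
    · exact Or.inl ⟨k+1, by omega, by omega, by omega⟩
    · exact Or.inl ⟨(m:ℤ)/2, by omega, by omega, by omega⟩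
  · by_cases hb : (m:ℤ)/2 ≤ k
    · exact Or.inr ⟨(m:ℤ)/2, by omega, by omega, by omega⟩
    · exact Or.inr ⟨k, by omega, by omega, by omega⟩

lemma keyA2 (m n k : ℕ) (h : 2*(k:ℤ)+2 ≤ m+n) :
    ∃ i:ℤ, (0 ≤ i ∧ i ≤ k+1) ∧ 2*i ≤ m ∧ 2*((k:ℤ)-i)+1 ≤ n := by
  by_cases hb : (m:ℤ) ≥ 2*(k+1)
  · exact ⟨k+1, by omega, by omega, by omega⟩
  · exact ⟨(m:ℤ)/2, by omega, by omega, by omega⟩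

lemma keyB2 (m n k : ℕ) (h : 2*(k:ℤ)+2 ≤ m+n) :
    ∃ i:ℤ, (-1 ≤ i ∧ i ≤ k) ∧ 2*i+1 ≤ m ∧ 2*((k:ℤ)-i) ≤ n := by
  by_cases he : (m:ℤ) % 2 = 0
  · by_cases hz : m = 0
    · exact ⟨-1, by omega, by omega, by omega⟩
    · by_cases hb : (m:ℤ)/2 - 1 ≤ k
      · exact ⟨(m:ℤ)/2 - 1, by omega, by omega, by omega⟩
      · exact ⟨k, by omega, by omega, by omega⟩
  · by_cases hb : (m:ℤ)/2 ≤ k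
    · exact ⟨(m:ℤ)/2, by omega, by omega, by omega⟩
    · exact ⟨k, by omega, by omega, by omega⟩

/-- The level sets of `X + Y` decompose as `{X+Y ≥ 2k+1} = A_k ∪ B_k` and
`{X+Y ≥ 2k+2} = A_k ∩ B_k` for `ℕ`-valued `X, Y`. -/
theorem levelSet_add_eq_union_inter {Ω : Type*} [MeasurableSpace Ω] (c : Set Ω → ℝ)
    (hc_mono : ∀ ⦃A B : Set Ω⦄, MeasurableSet A → MeasurableSet B → A ⊆ B → c A ≤ c B)
    (hc_range : ∀ A : Set Ω, MeasurableSet A → c A ∈ Set.Icc (0 : ℝ) 1)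
    (hc_empty : c ∅ = 0) (hc_univ : c Set.univ = 1)
    (X Y : Ω → ℝ) (hX : Measurable X) (hY : Measurable Y)
    (hXb : ∃ M, ∀ ω, |X ω| ≤ M) (hYb : ∃ M, ∀ ω, |Y ω| ≤ M)
    (hXnat : ∀ ω, ∃ n : ℕ, X ω = n) (hYnat : ∀ ω, ∃ n : ℕ, Y ω = n) (k : ℕ) :
    {ω | (2 * (k : ℝ) + 1) ≤ X ω + Y ω} =
      (⋃ i ∈ Finset.Icc (0 : ℤ) ((k : ℤ) + 1),
          {ω | ((2 * i : ℤ) : ℝ) ≤ X ω ∧ ((2 * ((k : ℤ) - i) + 1 : ℤ) : ℝ) ≤ Y ω}) ∪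
        (⋃ i ∈ Finset.Icc (-1 : ℤ) (k : ℤ),
          {ω | ((2 * i + 1 : ℤ) : ℝ) ≤ X ω ∧ ((2 * ((k : ℤ) - i) : ℤ) : ℝ) ≤ Y ω}) ∧
    {ω | (2 * (k : ℝ) + 2) ≤ X ω + Y ω} =
      (⋃ i ∈ Finset.Icc (0 : ℤ) ((k : ℤ) + 1),
          {ω | ((2 * i : ℤ) : ℝ) ≤ X ω ∧ ((2 * ((k : ℤ) - i) + 1 : ℤ) : ℝ) ≤ Y ω}) ∩
        (⋃ i ∈ Finset.Icc (-1 : ℤ) (k : ℤ),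
          {ω | ((2 * i + 1 : ℤ) : ℝ) ≤ X ω ∧ ((2 * ((k : ℤ) - i) : ℤ) : ℝ) ≤ Y ω}) := by
  constructor
  · ext ω
    obtain ⟨m, hm⟩ := hXnat ω
    obtain ⟨n, hn⟩ := hYnat ω
    simp only [mem_setOf_eq, mem_union, mem_iUnion, Finset.mem_Icc, hm, hn, exists_prop]
    constructor
    · intro h
      have h' : 2*(k:ℤ)+1 ≤ m+n := by exact_mod_cast h
      rcases key1 m n k h' with ⟨i, hi, h1, h2⟩ | ⟨i, hi, h1, h2⟩
      · exact Or.inl ⟨i, hi, by exact_mod_cast h1, by exact_mod_cast h2⟩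
      · exact Or.inr ⟨i, hi, by exact_mod_cast h1, by exact_mod_cast h2⟩
    · rintro (⟨i, hi, h1, h2⟩ | ⟨i, hi, h1, h2⟩)
      · have h1' : 2*i ≤ (m:ℤ) := by exact_mod_cast h1
        have h2' : 2*((k:ℤ)-i)+1 ≤ (n:ℤ) := by exact_mod_cast h2
        have : 2*(k:ℤ)+1 ≤ m+n := by omega
        exact_mod_cast this
      · have h1' : 2*i+1 ≤ (m:ℤ) := by exact_mod_cast h1
        have h2' : 2*((k:ℤ)-i) ≤ (n:ℤ) := by exact_mod_cast h2
        have : 2*(k:ℤ)+1 ≤ m+n := by omega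
        exact_mod_cast this
  · ext ω
    obtain ⟨m, hm⟩ := hXnat ω
    obtain ⟨n, hn⟩ := hYnat ω
    simp only [mem_setOf_eq, mem_inter_iff, mem_iUnion, Finset.mem_Icc, hm, hn, exists_prop]
    constructor
    · intro h
      have h' : 2*(k:ℤ)+2 ≤ m+n := by exact_mod_cast h
      obtain ⟨i, hi, h1, h2⟩ := keyA2 m n k h'
      obtain ⟨j, hj, h3, h4⟩ := keyB2 m n k h'
      exact ⟨⟨i, hi, by exact_mod_cast h1, by exact_mod_cast h2⟩,
             ⟨j, hj, by exact_mod_cast h3, by exact_mod_cast h4⟩⟩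
    · rintro ⟨⟨i, hi, h1, h2⟩, ⟨j, hj, h3, h4⟩⟩
      have h1' : 2*i ≤ (m:ℤ) := by exact_mod_cast h1
      have h2' : 2*((k:ℤ)-i)+1 ≤ (n:ℤ) := by exact_mod_cast h2
      have h3' : 2*j+1 ≤ (m:ℤ) := by exact_mod_cast h3
      have h4' : 2*((k:ℤ)-j) ≤ (n:ℤ) := by exact_mod_cast h4
      have : 2*(k:ℤ)+2 ≤ m+n := by omega
      exact_mod_cast this
end
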